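/- Let H be a Hopf algebra over R with bijective antipode S, and let A be a left H-module algebra that is projective as an R-module. Then the H-invariants of the smash product satisfy (A#H)^H = (1#∫_l)(A#1), i.e., every H-invariant element of A#H is a sum of elements (1#t)(a#1) with t a left integral and a ∈ A. Consequently Hom_{A#H}(A, A#H) ≅ (1#∫_l)(A#1). -/

import Mathlib

universe u v w

open TensorProduct

/-- A left integral: `h * t = ε(h) • t` for all `h`. -/
def IsLeftIntegral (R : Type u) {H : Type v} [CommRing R] [Ring H] [HopfAlgebra R H]
    (t : H) : Prop :=
  ∀ h : H, h * t = Coalgebra.counit (R := R) h • t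

section Smash

variable (R : Type u) (H : Type v) (A : Type w) [CommRing R] [Ring H] [HopfAlgebra R H]
  [Ring A] [Algebra R A] [Module H A] [SMulCommClass H R A] [IsScalarTower R H A]

/-- The action of `h ∈ H` on `A` as an `R`-linear map. -/
noncomputable def actMap (x : H) : A →ₗ[R] A := DistribSMul.toLinearMap R A x

/-- The `R`-linear map `a ↦ h • a` for fixed `a`. -/
noncomputable def smulBy (a : A) : H →ₗ[R] A where
  toFun h := h • a
  map_add' x y := add_smul x y a
  map_smul' r x := smul_assoc r x a

/-- Auxiliary bilinear map: `(x ⊗ y) ↦ ((b ⊗ g) ↦ (x • b) ⊗ (y * g))`. -/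
noncomputable def lmulAux : (H ⊗[R] H) →ₗ[R] (A ⊗[R] H) →ₗ[R] (A ⊗[R] H) :=
  TensorProduct.lift <| LinearMap.mk₂ R
    (fun x y => TensorProduct.map (actMap R H A x) (LinearMap.mulLeft R y))
    (fun x x' y => by
      ext b g
      simp [actMap, add_smul, add_tmul])
    (fun r x y => by
      ext b g
      simp [actMap, smul_assoc, smul_tmul'])
    (fun x y y' => by
      ext b g
      simp [add_mul, tmul_add])
    (fun x r y => by
      ext b g
      simp [LinearMap.mulLeft, smul_mul_assoc, tmul_smul])

/-- Left multiplication by `1 # h` on the smash product `A # H`: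
`(1#h)(b#g) = Σ (h₁ • b) # (h₂ g)`. -/
noncomputable def leftSmash (h : H) : (A ⊗[R] H) →ₗ[R] (A ⊗[R] H) :=
  lmulAux R H A (Coalgebra.comul h)

/-- The multiplication of the smash product `A # H`:
`(a#h)(b#g) = Σ a(h₁ • b) # (h₂ g)`, as a bilinear map on `A ⊗[R] H`. -/
noncomputable def smashMul : (A ⊗[R] H) →ₗ[R] (A ⊗[R] H) →ₗ[R] (A ⊗[R] H) :=
  TensorProduct.lift <| LinearMap.mk₂ R
    (fun a h => (TensorProduct.map (LinearMap.mulLeft R a) LinearMap.id) ∘ₗ leftSmash R H A h)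
    (fun a a' h => by
      try dsimp only
      have key : TensorProduct.map (LinearMap.mulLeft R (a + a')) (LinearMap.id : H →ₗ[R] H) =
          TensorProduct.map (LinearMap.mulLeft R a) LinearMap.id +
            TensorProduct.map (LinearMap.mulLeft R a') LinearMap.id := by
        ext x y; simp [add_mul, add_tmul]
      rw [key, LinearMap.add_comp])
    (fun r a h => by
      try dsimp only
      have key : TensorProduct.map (LinearMap.mulLeft R (r • a)) (LinearMap.id : H →ₗ[R] H) =
          r • TensorProduct.map (LinearMap.mulLeft R a) LinearMap.id := by
        ext x y; simp [smul_mul_assoc, smul_tmul']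
      rw [key, LinearMap.smul_comp])
    (fun a h h' => by
      try dsimp only
      have key : leftSmash R H A (h + h') = leftSmash R H A h + leftSmash R H A h' := by
        simp [leftSmash, map_add]
      rw [key, LinearMap.comp_add])
    (fun r a h => by
      try dsimp only
      have key : leftSmash R H A (r • h) = r • leftSmash R H A h := by
        simp [leftSmash, map_smul]
      rw [key, LinearMap.comp_smul])

/-- The projection `α : A # H → A`, `a # h ↦ a ε(h)`. -/
noncomputable def smashProj : (A ⊗[R] H) →ₗ[R] A :=
  (TensorProduct.rid R A).toLinearMap ∘ₗ LinearMap.lTensor A (Coalgebra.counit (R := R))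

end Smash

section HopfLemmas
open Coalgebra HopfAlgebra
variable {R : Type u} {H : Type v} [CommRing R] [Ring H] [HopfAlgebra R H]
local notation "ε" => Coalgebra.counit (R := R)
local notation "S" => HopfAlgebra.antipode (R := R) (A := H)
variable {ι κ : Type*}

lemma counit_smul_right_sum {x : H} (𝓡 : Repr R x ι) :
    ∑ i ∈ 𝓡.index, ε (𝓡.left i) • 𝓡.right i = x := by
  have h := congrArg (TensorProduct.lid R H) (Coalgebra.sum_counit_tmul_eq 𝓡)
  rw [map_sum] at h
  simp only [lid_tmul, one_smul] at h
  exact h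

lemma counit_smul_left_sum {x : H} (𝓡 : Repr R x ι) :
    ∑ i ∈ 𝓡.index, ε (𝓡.right i) • 𝓡.left i = x := by
  have h := congrArg (TensorProduct.rid R H) (Coalgebra.sum_tmul_counit_eq 𝓡)
  rw [map_sum] at h
  simp only [rid_tmul, one_smul] at h
  exact h

variable {M : Type*} [AddCommGroup M] [Module R M]

lemma collapse_left {x : H} (𝓡 : Repr R x ι) (σ : ∀ i, Repr R (𝓡.left i) κ)
    (φ : H →ₗ[R] H →ₗ[R] M) :
    ∑ i ∈ 𝓡.index, ∑ j ∈ (σ i).index,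
      φ ((σ i).left j) ((σ i).right j * S (𝓡.right i)) = φ x 1 := by
  classical
  have key := Coalgebra.sum_tmul_tmul_eq 𝓡 σ (fun i => ℛ R (𝓡.right i))
  set L : H ⊗[R] (H ⊗[R] H) →ₗ[R] M :=
    (TensorProduct.lift φ) ∘ₗ LinearMap.lTensor H (LinearMap.mul' R H ∘ₗ LinearMap.lTensor H S)
    with hL
  have hLpure : ∀ a b c : H, L (a ⊗ₜ (b ⊗ₜ c)) = φ a (b * S c) := by
    intro a b c
    simp [hL, LinearMap.lTensor_tmul]
  have h2 := congrArg L key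
  simp only [map_sum, hLpure] at h2
  rw [h2]
  have h3 : ∀ i ∈ 𝓡.index, ∑ j ∈ (ℛ R (𝓡.right i)).index,
      φ (𝓡.left i) ((ℛ R (𝓡.right i)).left j * S ((ℛ R (𝓡.right i)).right j))
      = ε (𝓡.right i) • φ (𝓡.left i) 1 := by
    intro i _
    rw [← map_sum, HopfAlgebra.sum_mul_antipode_eq_smul (ℛ R (𝓡.right i)), map_smul]
  rw [Finset.sum_congr rfl h3]
  have h4 := congrArg (φ.flip (1 : H)) (counit_smul_left_sum 𝓡)
  rw [map_sum] at h4
  simpa using h4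

lemma antipode_mul' (h g : H) : S (h * g) = S g * S h := by
  classical
  set Rh := ℛ R h with hRh
  set Rg := ℛ R g with hRg
  have sumSh : ∑ i ∈ Rh.index, ε (Rh.left i) • S (Rh.right i) = S h := by
    have := congrArg S (counit_smul_right_sum Rh); rw [map_sum] at this; simpa using this
  have sumSg : ∑ p ∈ Rg.index, ε (Rg.left p) • S (Rg.right p) = S g := by
    have := congrArg S (counit_smul_right_sum Rg); rw [map_sum] at this; simpa using this
  set σ : ∀ i, Repr R (Rh.left i) (H × H) := fun i => ℛ R (Rh.left i) with hσ
  set σ' : ∀ p, Repr R (Rg.left p) (H × H) := fun p => ℛ R (Rg.left p) with hσ'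
  have stepA : ∑ i ∈ Rh.index, ∑ p ∈ Rg.index,
        (ε (Rh.left i * Rg.left p) • (1 : H)) * (S (Rg.right p) * S (Rh.right i))
      = S g * S h := by
    have e1 : ∀ i p, (ε (Rh.left i * Rg.left p) • (1 : H)) * (S (Rg.right p) * S (Rh.right i))
        = ε (Rh.left i) • (ε (Rg.left p) • (S (Rg.right p) * S (Rh.right i))) := by
      intro i p
      rw [smul_mul_assoc, one_mul, Bialgebra.counit_mul, mul_smul]
    calc ∑ i ∈ Rh.index, ∑ p ∈ Rg.index,
          (ε (Rh.left i * Rg.left p) • (1 : H)) * (S (Rg.right p) * S (Rh.right i))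
        = ∑ i ∈ Rh.index, ε (Rh.left i) •
            ∑ p ∈ Rg.index, ε (Rg.left p) • (S (Rg.right p) * S (Rh.right i)) := by
          refine Finset.sum_congr rfl fun i _ => ?_
          rw [Finset.smul_sum]
          exact Finset.sum_congr rfl fun p _ => e1 i p
      _ = ∑ i ∈ Rh.index, ε (Rh.left i) • (S g * S (Rh.right i)) := by
          refine Finset.sum_congr rfl fun i _ => ?_
          congr 1
          rw [← sumSg, Finset.sum_mul]
          exact Finset.sum_congr rfl fun p _ => (smul_mul_assoc _ _ _).symm
      _ = S g * S h := by
          rw [← sumSh, Finset.mul_sum]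
          exact Finset.sum_congr rfl fun i _ => (mul_smul_comm _ _ _).symm
  rw [← stepA]
  have stepB : ∀ i p, (ε (Rh.left i * Rg.left p) • (1 : H)) * (S (Rg.right p) * S (Rh.right i))
      = ∑ j ∈ (σ i).index, ∑ q ∈ (σ' p).index,
          (S ((σ i).left j * (σ' p).left q) * ((σ i).right j * (σ' p).right q))
            * (S (Rg.right p) * S (Rh.right i)) := by
    intro i p
    have hx : ε (Rh.left i * Rg.left p) • (1 : H)
        = ∑ j ∈ (σ i).index, ∑ q ∈ (σ' p).index,
            S ((σ i).left j * (σ' p).left q) * ((σ i).right j * (σ' p).right q) := by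
      rw [← HopfAlgebra.sum_antipode_mul_eq_smul ((σ i).mul (σ' p))]
      exact Finset.sum_product _ _ _
    rw [hx, Finset.sum_mul]
    exact Finset.sum_congr rfl fun j _ => Finset.sum_mul _ _ _
  simp only [stepB]
  rw [Finset.sum_congr rfl (fun i (_ : i ∈ Rh.index) => Finset.sum_comm)]
  have collg : ∀ i ∈ Rh.index, ∀ j ∈ (σ i).index,
      ∑ p ∈ Rg.index, ∑ q ∈ (σ' p).index,
        (S ((σ i).left j * (σ' p).left q) * ((σ i).right j * (σ' p).right q))
          * (S (Rg.right p) * S (Rh.right i))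
      = S ((σ i).left j * g) * ((σ i).right j * S (Rh.right i)) := by
    intro i _ j _
    set φ₁ : H →ₗ[R] H →ₗ[R] H := LinearMap.mk₂ R
      (fun u v => S ((σ i).left j * u) * ((σ i).right j * v * S (Rh.right i)))
      (by intros; simp [mul_add, add_mul])
      (by intros; simp [mul_smul_comm, smul_mul_assoc])
      (by intros; simp [mul_add, add_mul])
      (by intros; simp [mul_smul_comm, smul_mul_assoc]) with hφ₁
    have hc := collapse_left Rg σ' φ₁
    simp only [hφ₁, LinearMap.mk₂_apply, mul_one] at hc
    rw [← hc]
    refine Finset.sum_congr rfl fun p _ => Finset.sum_congr rfl fun q _ => ?_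
    simp [mul_assoc]
  rw [Finset.sum_congr rfl (fun i hi => Finset.sum_congr rfl (fun j hj => collg i hi j hj))]
  set φ₂ : H →ₗ[R] H →ₗ[R] H := LinearMap.mk₂ R (fun u v => S (u * g) * v)
    (by intros; simp [add_mul, mul_add])
    (by intros; simp [smul_mul_assoc, mul_smul_comm])
    (by intros; simp [mul_add])
    (by intros; simp [mul_smul_comm]) with hφ₂
  have hc2 := collapse_left Rh σ φ₂
  simp only [hφ₂, LinearMap.mk₂_apply, mul_one] at hc2
  exact hc2.symm

lemma antipode_one' : S 1 = (1 : H) := by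
  have h := HopfAlgebra.mul_antipode_rTensor_comul_apply (R := R) (A := H) 1
  simpa [Algebra.TensorProduct.one_def] using h

variable (hS : Function.Bijective (HopfAlgebra.antipode (R := R) (A := H)))

/-- The inverse of the antipode, as a linear map. -/
noncomputable def antipodeInv : H →ₗ[R] H :=
  ((LinearEquiv.ofBijective S hS).symm : H ≃ₗ[R] H)

lemma antipode_antipodeInv (x : H) : S (antipodeInv hS x) = x :=
  (LinearEquiv.ofBijective S hS).apply_symm_apply x

lemma antipodeInv_antipode (x : H) : antipodeInv hS (S x) = x :=
  (LinearEquiv.ofBijective S hS).symm_apply_apply x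

lemma sum_antipodeInv_right_mul_left {x : H} (𝓡 : Repr R x ι) :
    ∑ i ∈ 𝓡.index, antipodeInv hS (𝓡.right i) * 𝓡.left i = ε x • 1 := by
  apply hS.injective
  rw [map_sum, map_smul, antipode_one']
  calc ∑ i ∈ 𝓡.index, S (antipodeInv hS (𝓡.right i) * 𝓡.left i)
      = ∑ i ∈ 𝓡.index, S (𝓡.left i) * 𝓡.right i := by
        refine Finset.sum_congr rfl fun i _ => ?_
        rw [antipode_mul', antipode_antipodeInv]
    _ = ε x • 1 := HopfAlgebra.sum_antipode_mul_eq_smul 𝓡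

lemma sum_right_mul_antipodeInv_left {x : H} (𝓡 : Repr R x ι) :
    ∑ i ∈ 𝓡.index, 𝓡.right i * antipodeInv hS (𝓡.left i) = ε x • 1 := by
  apply hS.injective
  rw [map_sum, map_smul, antipode_one']
  calc ∑ i ∈ 𝓡.index, S (𝓡.right i * antipodeInv hS (𝓡.left i))
      = ∑ i ∈ 𝓡.index, 𝓡.left i * S (𝓡.right i) := by
        refine Finset.sum_congr rfl fun i _ => ?_
        rw [antipode_mul', antipode_antipodeInv]
    _ = ε x • 1 := HopfAlgebra.sum_mul_antipode_eq_smul 𝓡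

variable {M : Type*} [AddCommGroup M] [Module R M]

lemma collapse_I1 {x : H} (𝓡 : Repr R x ι) (ρ : ∀ i, Repr R (𝓡.right i) κ)
    (φ : H →ₗ[R] H →ₗ[R] M) :
    ∑ i ∈ 𝓡.index, ∑ j ∈ (ρ i).index,
      φ ((ρ i).left j * antipodeInv hS (𝓡.left i)) ((ρ i).right j) = φ 1 x := by
  classical
  have key := Coalgebra.sum_tmul_tmul_eq 𝓡 (fun i => ℛ R (𝓡.left i)) ρ
  set q : H ⊗[R] H →ₗ[R] H := LinearMap.mul' R H ∘ₗ (TensorProduct.comm R H H).toLinearMap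
      ∘ₗ LinearMap.rTensor H (antipodeInv hS) with hq
  set L : H ⊗[R] (H ⊗[R] H) →ₗ[R] M :=
    (TensorProduct.lift φ) ∘ₗ LinearMap.rTensor H q
      ∘ₗ (TensorProduct.assoc R H H H).symm.toLinearMap with hL
  have hLpure : ∀ a b c : H, L (a ⊗ₜ (b ⊗ₜ c)) = φ (b * antipodeInv hS a) c := by
    intro a b c
    simp [hL, hq]
  have h2 := congrArg L key
  simp only [map_sum, hLpure] at h2
  rw [← h2]
  have h3 : ∀ i ∈ 𝓡.index, ∑ j ∈ (ℛ R (𝓡.left i)).index,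
      φ ((ℛ R (𝓡.left i)).right j * antipodeInv hS ((ℛ R (𝓡.left i)).left j)) (𝓡.right i)
      = ε (𝓡.left i) • φ 1 (𝓡.right i) := by
    intro i _
    have := congrArg (φ.flip (𝓡.right i))
      (sum_right_mul_antipodeInv_left hS (ℛ R (𝓡.left i)))
    rw [map_sum, map_smul] at this
    simpa using this
  rw [Finset.sum_congr rfl h3]
  have h4 := congrArg (φ 1) (counit_smul_right_sum 𝓡)
  rw [map_sum] at h4
  simpa using h4

lemma collapse_I2 {x : H} (𝓡 : Repr R x ι) (ρ : ∀ i, Repr R (𝓡.right i) κ)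
    (φ : H →ₗ[R] H →ₗ[R] M) :
    ∑ i ∈ 𝓡.index, ∑ j ∈ (ρ i).index,
      φ (antipodeInv hS ((ρ i).left j) * 𝓡.left i) ((ρ i).right j) = φ 1 x := by
  classical
  have key := Coalgebra.sum_tmul_tmul_eq 𝓡 (fun i => ℛ R (𝓡.left i)) ρ
  set q : H ⊗[R] H →ₗ[R] H := LinearMap.mul' R H ∘ₗ (TensorProduct.comm R H H).toLinearMap
      ∘ₗ LinearMap.lTensor H (antipodeInv hS) with hq
  set L : H ⊗[R] (H ⊗[R] H) →ₗ[R] M :=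
    (TensorProduct.lift φ) ∘ₗ LinearMap.rTensor H q
      ∘ₗ (TensorProduct.assoc R H H H).symm.toLinearMap with hL
  have hLpure : ∀ a b c : H, L (a ⊗ₜ (b ⊗ₜ c)) = φ (antipodeInv hS b * a) c := by
    intro a b c
    simp [hL, hq]
  have h2 := congrArg L key
  simp only [map_sum, hLpure] at h2
  rw [← h2]
  have h3 : ∀ i ∈ 𝓡.index, ∑ j ∈ (ℛ R (𝓡.left i)).index,
      φ (antipodeInv hS ((ℛ R (𝓡.left i)).right j) * (ℛ R (𝓡.left i)).left j) (𝓡.right i)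
      = ε (𝓡.left i) • φ 1 (𝓡.right i) := by
    intro i _
    have := congrArg (φ.flip (𝓡.right i))
      (sum_antipodeInv_right_mul_left hS (ℛ R (𝓡.left i)))
    rw [map_sum, map_smul] at this
    simpa using this
  rw [Finset.sum_congr rfl h3]
  have h4 := congrArg (φ 1) (counit_smul_right_sum 𝓡)
  rw [map_sum] at h4
  simpa using h4

end HopfLemmas

section SmashLemmas
open Coalgebra HopfAlgebra
variable {R : Type u} {H : Type v} {A : Type w} [CommRing R] [Ring H] [HopfAlgebra R H]
  [Ring A] [Algebra R A] [Module H A] [SMulCommClass H R A] [IsScalarTower R H A]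

local notation "ε" => Coalgebra.counit (R := R)
local notation "S" => HopfAlgebra.antipode (R := R) (A := H)
variable {ι κ : Type*}

lemma lmulAux_tmul (x y : H) (b : A) (g : H) :
    lmulAux R H A (x ⊗ₜ y) (b ⊗ₜ g) = (x • b) ⊗ₜ[R] (y * g) := by
  simp [lmulAux, actMap]

lemma leftSmash_tmul {h : H} (𝓡 : Repr R h ι) (b : A) (g : H) :
    leftSmash R H A h (b ⊗ₜ g) = ∑ i ∈ 𝓡.index, (𝓡.left i • b) ⊗ₜ[R] (𝓡.right i * g) := by
  rw [show leftSmash R H A h = lmulAux R H A (Coalgebra.comul h) from rfl, ← 𝓡.eq, map_sum,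
    LinearMap.sum_apply]
  exact Finset.sum_congr rfl fun i _ => lmulAux_tmul _ _ _ _

lemma lmulAux_mul (u v : H ⊗[R] H) :
    lmulAux R H A (u * v) = lmulAux R H A u ∘ₗ lmulAux R H A v := by
  induction u using TensorProduct.induction_on with
  | zero => simp
  | add x y hx hy => simp [add_mul, hx, hy, LinearMap.add_comp]
  | tmul x y =>
    induction v using TensorProduct.induction_on with
    | zero => simp
    | add x' y' hx hy => simp [mul_add, hx, hy, LinearMap.comp_add]
    | tmul x' y' =>
      ext b g
      simp [Algebra.TensorProduct.tmul_mul_tmul, lmulAux_tmul, mul_smul, mul_assoc]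

lemma leftSmash_mul (h g : H) :
    leftSmash R H A (h * g) = leftSmash R H A h ∘ₗ leftSmash R H A g := by
  show lmulAux R H A (Coalgebra.comul (h * g)) = _
  rw [Bialgebra.comul_mul, lmulAux_mul]
  rfl

lemma leftSmash_smul (r : R) (h : H) (z : A ⊗[R] H) :
    leftSmash R H A (r • h) z = r • leftSmash R H A h z := by
  show lmulAux R H A (Coalgebra.comul (r • h)) z = _
  rw [map_smul, map_smul, LinearMap.smul_apply]
  rfl

/-- `φ : H ⊗ A → A # H`, `h ⊗ a ↦ (1#h)(a#1)`. -/
noncomputable def smashPhi : H ⊗[R] A →ₗ[R] A ⊗[R] H :=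
  TensorProduct.lift <| LinearMap.mk₂ R (fun h a => leftSmash R H A h (a ⊗ₜ 1))
    (fun h h' a => by
      show lmulAux R H A (Coalgebra.comul (h + h')) _ = _
      rw [map_add, map_add, LinearMap.add_apply]; rfl)
    (fun r h a => leftSmash_smul r h _)
    (fun h a a' => by rw [add_tmul, map_add])
    (fun r h a => by rw [← smul_tmul', map_smul])

lemma smashPhi_tmul' (h : H) (a : A) :
    smashPhi (h ⊗ₜ a) = leftSmash R H A h (a ⊗ₜ 1) := by
  simp [smashPhi]

lemma smashPhi_tmul {h : H} (𝓡 : Repr R h ι) (a : A) :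
    smashPhi (h ⊗ₜ a) = ∑ i ∈ 𝓡.index, (𝓡.left i • a) ⊗ₜ[R] 𝓡.right i := by
  rw [smashPhi_tmul', leftSmash_tmul 𝓡]
  simp

section Inv
variable (hS : Function.Bijective (HopfAlgebra.antipode (R := R) (A := H)))

/-- `ψ : A # H → H ⊗ A`, `a ⊗ h ↦ Σ h₂ ⊗ S⁻¹(h₁) • a`. -/
noncomputable def smashPsi : A ⊗[R] H →ₗ[R] H ⊗[R] A :=
  TensorProduct.lift <| LinearMap.mk₂ R
    (fun a h => (TensorProduct.comm R A H)
      ((TensorProduct.map ((smulBy R H A a) ∘ₗ antipodeInv hS) LinearMap.id)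
        (Coalgebra.comul h)))
    (fun a a' h => by
      have hadd : smulBy R H A (a + a') = smulBy R H A a + smulBy R H A a' := by
        ext x; simp [smulBy, smul_add]
      rw [hadd, LinearMap.add_comp, TensorProduct.map_add_left, LinearMap.add_apply, map_add])
    (fun r a h => by
      have hsm : smulBy R H A (r • a) = r • smulBy R H A a := by
        ext x; exact smul_comm x r a
      rw [hsm, LinearMap.smul_comp, TensorProduct.map_smul_left, LinearMap.smul_apply, map_smul])
    (fun a h h' => by rw [map_add, map_add, map_add])
    (fun r a h => by rw [map_smul, map_smul, map_smul])

lemma smashPsi_tmul {h : H} (𝓡 : Repr R h ι) (a : A) :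
    smashPsi hS (a ⊗ₜ h)
      = ∑ i ∈ 𝓡.index, 𝓡.right i ⊗ₜ[R] (antipodeInv hS (𝓡.left i) • a) := by
  simp only [smashPsi, TensorProduct.lift.tmul, LinearMap.mk₂_apply]
  rw [← 𝓡.eq, map_sum, map_sum]
  simp [smulBy]

lemma smashPhi_comp_smashPsi :
    smashPhi ∘ₗ smashPsi (R := R) (H := H) (A := A) hS = LinearMap.id := by
  refine TensorProduct.ext' fun a h => ?_
  rw [LinearMap.comp_apply, LinearMap.id_apply]
  set 𝓡 := ℛ R h with h𝓡
  set ρ : ∀ i, Repr R (𝓡.right i) (H × H) := fun i => ℛ R (𝓡.right i) with hρ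
  rw [smashPsi_tmul hS 𝓡, map_sum]
  set φ : H →ₗ[R] H →ₗ[R] A ⊗[R] H := LinearMap.mk₂ R (fun u v => (u • a) ⊗ₜ[R] v)
    (by intros; simp [add_smul, add_tmul])
    (by intros; rw [smul_assoc, ← smul_tmul'])
    (by intros; simp [tmul_add])
    (by intros; rw [tmul_smul])
    with hφ
  have key := collapse_I1 hS 𝓡 ρ φ
  simp only [hφ, LinearMap.mk₂_apply, one_smul] at key
  rw [← key]
  refine Finset.sum_congr rfl fun i _ => ?_
  rw [smashPhi_tmul (ρ i)]
  exact Finset.sum_congr rfl fun j _ => by rw [mul_smul]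

lemma smashPsi_comp_smashPhi :
    smashPsi (R := R) (H := H) (A := A) hS ∘ₗ smashPhi = LinearMap.id := by
  refine TensorProduct.ext' fun h a => ?_
  rw [LinearMap.comp_apply, LinearMap.id_apply]
  set 𝓡 := ℛ R h with h𝓡
  set ρ : ∀ i, Repr R (𝓡.right i) (H × H) := fun i => ℛ R (𝓡.right i) with hρ
  rw [smashPhi_tmul 𝓡, map_sum]
  set φ : H →ₗ[R] H →ₗ[R] H ⊗[R] A := LinearMap.mk₂ R (fun u v => v ⊗ₜ[R] (u • a))
    (by intros; simp [add_smul, tmul_add])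
    (by intros; rw [smul_assoc, tmul_smul])
    (by intros; simp [add_tmul])
    (by intros; rw [← smul_tmul'])
    with hφ
  have key := collapse_I2 hS 𝓡 ρ φ
  simp only [hφ, LinearMap.mk₂_apply, one_smul] at key
  rw [← key]
  refine Finset.sum_congr rfl fun i _ => ?_
  rw [smashPsi_tmul hS (ρ i)]
  exact Finset.sum_congr rfl fun j _ => by rw [mul_smul]

lemma smashEquivariance (h : H) :
    leftSmash R H A h ∘ₗ smashPhi
      = smashPhi ∘ₗ LinearMap.rTensor A (LinearMap.mulLeft R h) := by
  refine TensorProduct.ext' fun g a => ?_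
  rw [LinearMap.comp_apply, LinearMap.comp_apply, LinearMap.rTensor_tmul,
    LinearMap.mulLeft_apply, smashPhi_tmul', smashPhi_tmul', leftSmash_mul,
    LinearMap.comp_apply]
end Inv

end SmashLemmas


lemma proj_decomp {R : Type u} {N : Type v} {A : Type w} [CommRing R]
    [AddCommGroup N] [Module R N] [AddCommGroup A] [Module R A] [Module.Projective R A]
    {ι : Type*} (g : ι → (N →ₗ[R] N)) (c : ι → R) (w : N ⊗[R] A)
    (hw : ∀ i, LinearMap.rTensor A (g i) w = c i • w) :
    ∃ (t : Finset A) (n : A → N) (a : A → A),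
      (∀ k ∈ t, ∀ i, g i (n k) = c i • n k) ∧ w = ∑ k ∈ t, n k ⊗ₜ[R] a k := by
  classical
  obtain ⟨s, hs⟩ := Module.projective_def'.mp ‹Module.Projective R A›
  set π : (A →₀ R) →ₗ[R] A := Finsupp.linearCombination R id with hπ
  set w' := LinearMap.lTensor N s w with hw'
  have hww : LinearMap.lTensor N π w' = w := by
    rw [hw', ← LinearMap.comp_apply, ← LinearMap.lTensor_comp, hπ, hs, LinearMap.lTensor_id,
      LinearMap.id_apply]
  have hinv' : ∀ i, LinearMap.rTensor (A →₀ R) (g i) w' = c i • w' := by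
    intro i
    rw [hw', ← LinearMap.comp_apply, LinearMap.rTensor_comp_lTensor,
      ← LinearMap.lTensor_comp_rTensor, LinearMap.comp_apply, hw, map_smul]
  set f := TensorProduct.finsuppScalarRight R R N A w' with hf
  have keymap : ∀ (i : ι) (b : A),
      ((Finsupp.lapply b : (A →₀ N) →ₗ[R] N) ∘ₗ
          (TensorProduct.finsuppScalarRight R R N A).toLinearMap) ∘ₗ
        LinearMap.rTensor (A →₀ R) (g i)
      = (g i) ∘ₗ ((Finsupp.lapply b : (A →₀ N) →ₗ[R] N) ∘ₗ
          (TensorProduct.finsuppScalarRight R R N A).toLinearMap) := by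
    intro i b
    refine TensorProduct.ext' fun m p => ?_
    simp only [LinearMap.comp_apply, LinearMap.rTensor_tmul, LinearEquiv.coe_coe,
      Finsupp.lapply_apply, TensorProduct.finsuppScalarRight_apply_tmul_apply]
    rw [map_smul]
  have hint : ∀ (b : A) (i : ι), g i (f b) = c i • f b := by
    intro b i
    have e1 := LinearMap.congr_fun (keymap i b) w'
    simp only [LinearMap.comp_apply, LinearEquiv.coe_coe, Finsupp.lapply_apply] at e1
    rw [hinv' i, LinearEquiv.map_smul, Finsupp.smul_apply] at e1
    rw [← hf] at e1
    exact e1.symm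
  have hw'' : w' = ∑ b ∈ f.support, (f b) ⊗ₜ[R] (Finsupp.single b (1 : R)) := by
    have e0 : w' = (TensorProduct.finsuppScalarRight R R N A).symm f := by
      rw [hf, LinearEquiv.symm_apply_apply]
    rw [e0]
    conv_lhs => rw [show f = ∑ b ∈ f.support, Finsupp.single b (f b) from
      (Finsupp.sum_single f).symm]
    rw [map_sum]
    exact Finset.sum_congr rfl fun b _ =>
      TensorProduct.finsuppScalarRight_symm_apply_single b (f b)
  refine ⟨f.support, fun b => f b, fun b => π (Finsupp.single b 1),
    fun b _ i => hint b i, ?_⟩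
  rw [← hww, hw'', map_sum]
  exact Finset.sum_congr rfl fun b _ => by rw [LinearMap.lTensor_tmul]

/-- For a Hopf algebra `H` with bijective antipode and a left `H`-module algebra `A` which is
projective as an `R`-module, the `H`-invariants of the smash product `A # H` are exactly
`(1 # ∫_l)(A # 1)`: an element `z` satisfies `(1#h)z = ε(h)z` for all `h` iff `z` lies in the
`R`-span of the elements `(1#t)(a#1)` with `t` a left integral and `a ∈ A`. -/
theorem smash_invariants_eq_integrals_mul (R : Type u) (H : Type v) (A : Type w) [CommRing R]
    [Ring H] [HopfAlgebra R H] [Ring A] [Algebra R A] [Module H A] [SMulCommClass H R A]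
    [IsScalarTower R H A] [Module.Projective R A]
    (hS : Function.Bijective (HopfAlgebra.antipode (R := R) (A := H)))
    -- `A` is a left `H`-module algebra: `h • (ab) = Σ (h₁ • a)(h₂ • b)` and `h • 1 = ε(h)1`:
    (hact_mul : ∀ (h : H) (a b : A), h • (a * b) =
      LinearMap.mul' R A ((TensorProduct.map (smulBy R H A a) (smulBy R H A b))
        (Coalgebra.comul h)))
    (hact_one : ∀ h : H, h • (1 : A) = Coalgebra.counit (R := R) h • (1 : A)) :
    {z : A ⊗[R] H | ∀ h : H, leftSmash R H A h z = Coalgebra.counit (R := R) h • z} =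
      ↑(Submodule.span R {z : A ⊗[R] H | ∃ (t : H) (a : A),
        IsLeftIntegral R t ∧ z = leftSmash R H A t (a ⊗ₜ[R] (1 : H))}) := by
  classical
  apply Set.Subset.antisymm
  · intro z hz
    simp only [Set.mem_setOf_eq] at hz
    have hphipsi := smashPhi_comp_smashPsi (R := R) (H := H) (A := A) hS
    have hpsiphi := smashPsi_comp_smashPhi (R := R) (H := H) (A := A) hS
    set w := smashPsi hS z with hw
    have hphiw : smashPhi w = z := by
      have := LinearMap.congr_fun hphipsi z
      simpa [hw] using this
    have phiInj : Function.Injective (smashPhi (R := R) (H := H) (A := A)) := by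
      intro x y hxy
      have hx := LinearMap.congr_fun hpsiphi x
      have hy := LinearMap.congr_fun hpsiphi y
      simp only [LinearMap.comp_apply, LinearMap.id_apply] at hx hy
      rw [← hx, ← hy, hxy]
    have hinv : ∀ h : H, LinearMap.rTensor A (LinearMap.mulLeft R h) w
        = Coalgebra.counit (R := R) h • w := by
      intro h
      apply phiInj
      have e := LinearMap.congr_fun (smashEquivariance (R := R) (H := H) (A := A) h) w
      simp only [LinearMap.comp_apply] at e
      rw [← e, hphiw, hz h, map_smul, hphiw]
    obtain ⟨t, n, a, hn, hwsum⟩ := proj_decomp (fun h : H => LinearMap.mulLeft R h)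
      (fun h : H => Coalgebra.counit (R := R) h) w hinv
    have hz' : z = ∑ k ∈ t, leftSmash R H A (n k) ((a k) ⊗ₜ[R] (1 : H)) := by
      rw [← hphiw, hwsum, map_sum]
      exact Finset.sum_congr rfl fun k _ => by rw [smashPhi_tmul']
    rw [hz']
    refine Submodule.sum_mem _ fun k hk => Submodule.subset_span ?_
    exact ⟨n k, a k, fun h => hn k hk h, rfl⟩
  · let Inv : Submodule R (A ⊗[R] H) :=
      { carrier := {z : A ⊗[R] H | ∀ h : H,
          leftSmash R H A h z = Coalgebra.counit (R := R) h • z}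
        add_mem' := by
          intro x y hx hy h
          rw [map_add, hx h, hy h, smul_add]
        zero_mem' := by
          intro h
          rw [map_zero, smul_zero]
        smul_mem' := by
          intro r x hx h
          rw [map_smul, hx h, smul_comm] }
    intro z hz
    have hle : Submodule.span R {z : A ⊗[R] H | ∃ (t : H) (a : A),
        IsLeftIntegral R t ∧ z = leftSmash R H A t (a ⊗ₜ[R] (1 : H))} ≤ Inv := by
      rw [Submodule.span_le]
      rintro z' ⟨t, a, ht, rfl⟩ h
      rw [← LinearMap.comp_apply, ← leftSmash_mul, ht h, leftSmash_smul]
    exact hle hz
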